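/- The generating set A = {a, a⁻¹, t, t⁻¹} for G = ℤ² ⋊ ℤ/2ℤ (swap action, a = ((1,0),0), t = ((0,0),1)) does not have the falsification by fellow traveler property: for every k ≥ 0 there exists a non-geodesic word w over A such that no strictly shorter word over A representing the same element synchronously k-fellow travels w. (One may take w = t aⁿ t aⁿ t for n sufficiently large compared to k.) -/

import Mathlib

/-- The coordinate-swapping automorphism of ℤ². -/
def swapAut : MulAut (Multiplicative (ℤ × ℤ)) :=
  AddEquiv.toMultiplicative (AddEquiv.prodComm : (ℤ × ℤ) ≃+ (ℤ × ℤ))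

lemma swapAut_sq : swapAut ^ 2 = 1 := by
  refine MulEquiv.ext fun z => ?_
  show swapAut (swapAut z) = z
  cases z
  rfl

/-- The action of ℤ/2ℤ on ℤ² by swapping the two coordinates. -/
def swapAction : Multiplicative (ZMod 2) →* MulAut (Multiplicative (ℤ × ℤ)) where
  toFun ε := swapAut ^ (Multiplicative.toAdd ε).val
  map_one' := rfl
  map_mul' x y := by
    show swapAut ^ _ = swapAut ^ _ * swapAut ^ _
    rw [← pow_add]
    have key : ∀ m n : ℕ, m % 2 = n % 2 → swapAut ^ m = swapAut ^ n := by
      intro m n h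
      rw [← Nat.div_add_mod m 2, ← Nat.div_add_mod n 2, h, pow_add, pow_add,
        pow_mul, pow_mul, swapAut_sq]
      simp
    apply key
    have := ZMod.val_add (Multiplicative.toAdd x) (Multiplicative.toAdd y)
    simp only [toAdd_mul] at *
    omega

/-- The group G = ℤ² ⋊ ℤ/2ℤ with the swap action. -/
abbrev GG := SemidirectProduct (Multiplicative (ℤ × ℤ)) (Multiplicative (ZMod 2)) swapAction

/-- The generator a = ((1,0), 0). -/
def ga : GG := SemidirectProduct.inl (Multiplicative.ofAdd ((1, 0) : ℤ × ℤ))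

/-- The generator t = ((0,0), 1). -/
def gt : GG := SemidirectProduct.inr (Multiplicative.ofAdd (1 : ZMod 2))

/-- The element ((x,y), ε) of G. -/
def el (x y : ℤ) (ε : ZMod 2) : GG :=
  ⟨Multiplicative.ofAdd (x, y), Multiplicative.ofAdd ε⟩

/-- The generating set A = {a, a⁻¹, t, t⁻¹}. -/
def GenSet : Set GG := {ga, ga⁻¹, gt, gt⁻¹}

/-- `w` is a word over the alphabet A. -/
def IsWord (w : List GG) : Prop := ∀ x ∈ w, x ∈ GenSet

/-- `w` is a word over A representing the group element `g` (via its product). -/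
def Represents (w : List GG) (g : GG) : Prop := IsWord w ∧ w.prod = g

/-- The word length of `g`: minimal length of a word over A representing `g`. -/
noncomputable def wordLength (g : GG) : ℕ :=
  sInf {n | ∃ w : List GG, Represents w g ∧ w.length = n}

/-- A word over A is geodesic if no strictly shorter word over A represents
the same element. -/
def IsGeodesic (w : List GG) : Prop :=
  IsWord w ∧ ∀ v : List GG, IsWord v → v.prod = w.prod → w.length ≤ v.length

open Classical in
/-- The number of t-letters of a word (occurrences of t and t⁻¹). -/
noncomputable def tCount (w : List GG) : ℕ :=
  w.countP (fun x => decide (x = gt ∨ x = gt⁻¹))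

/-- The word aˣ over A: x letters `a` if x ≥ 0, |x| letters `a⁻¹` if x < 0. -/
def apow (x : ℤ) : List GG :=
  if 0 ≤ x then List.replicate x.toNat ga else List.replicate (-x).toNat ga⁻¹

/-- The word metric on G with respect to A. -/
noncomputable def dA (g h : GG) : ℕ := wordLength (g⁻¹ * h)

/-- The point of G reached at time i along the word w (the endpoint if i
exceeds the length of w). -/
def pt (w : List GG) (i : ℕ) : GG := (w.take i).prod

/-- Words u and w synchronously k-fellow travel. -/
def FellowTravels (k : ℕ) (u w : List GG) : Prop :=
  ∀ i : ℕ, dA (pt u i) (pt w i) ≤ k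

/-!
Write elements of G as ((x, y), ε). A letter a^{±1} changes |x| + |y| by at most one and t swaps
x and y, so a word with m letters t reaching ((x, y), ε) has length at least |x| + |y| + m, with
m ≡ ε (mod 2). Thus every word for ((n, n), 1) shorter than t aⁿ t aⁿ t, such as aⁿ t aⁿ, has
exactly one letter t. Cut at any time, one of its two halves is a power of a, and either case puts
the traveller at distance at least n from ((0, n), 1), where t aⁿ t aⁿ t stands at time n + 1.
-/

def xCoord (g : GG) : ℤ := (Multiplicative.toAdd g.left).1

def yCoord (g : GG) : ℤ := (Multiplicative.toAdd g.left).2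

def parity (g : GG) : ZMod 2 := Multiplicative.toAdd g.right

def taxicab (g : GG) : ℕ := (xCoord g).natAbs + (yCoord g).natAbs

@[simp] lemma xCoord_el (x y : ℤ) (e : ZMod 2) : xCoord (el x y e) = x := rfl

@[simp] lemma yCoord_el (x y : ℤ) (e : ZMod 2) : yCoord (el x y e) = y := rfl

@[simp] lemma parity_el (x y : ℤ) (e : ZMod 2) : parity (el x y e) = e := rfl

@[simp] lemma taxicab_el (x y : ℤ) (e : ZMod 2) : taxicab (el x y e) = x.natAbs + y.natAbs := rfl

lemma el_coords (g : GG) : el (xCoord g) (yCoord g) (parity g) = g := rfl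

lemma el_zero_mul (x y x' y' : ℤ) (e : ZMod 2) :
    el x y 0 * el x' y' e = el (x + x') (y + y') e :=
  SemidirectProduct.ext rfl (congrArg Multiplicative.ofAdd (zero_add e))

lemma el_one_mul (x y x' y' : ℤ) (e : ZMod 2) :
    el x y 1 * el x' y' e = el (x + y') (y + x') (1 + e) :=
  SemidirectProduct.ext rfl rfl

lemma ga_zpow (x : ℤ) : ga ^ x = el x 0 0 := by
  rw [ga, ← map_zpow, ← ofAdd_zsmul]
  simp [el]

lemma gt_eq_el : gt = el 0 0 1 := rfl

lemma ga_mul (g : GG) : ga * g = el (1 + xCoord g) (yCoord g) (parity g) :=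
  (el_zero_mul 1 0 (xCoord g) (yCoord g) (parity g)).trans (by rw [zero_add])

lemma ga_inv_eq_el : ga⁻¹ = el (-1) 0 0 := by
  rw [← zpow_neg_one, ga_zpow]

lemma ga_inv_mul (g : GG) : ga⁻¹ * g = el (-1 + xCoord g) (yCoord g) (parity g) := by
  rw [ga_inv_eq_el]
  exact (el_zero_mul (-1) 0 (xCoord g) (yCoord g) (parity g)).trans (by rw [zero_add])

lemma gt_mul (g : GG) : gt * g = el (yCoord g) (xCoord g) (1 + parity g) :=
  (el_one_mul 0 0 (xCoord g) (yCoord g) (parity g)).trans (by rw [zero_add, zero_add])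

lemma gt_inv : gt⁻¹ = gt :=
  inv_eq_of_mul_eq_one_right (gt_mul gt)

lemma ga_ne_gt : ga ≠ gt := fun h => zero_ne_one (congrArg parity h)

lemma ga_inv_ne_gt : ga⁻¹ ≠ gt := by
  rw [ga_inv_eq_el]
  exact fun h => zero_ne_one (congrArg parity h)

lemma el_one_eq (x y : ℤ) : el x y 1 = el x 0 0 * gt * el y 0 0 := by
  rw [gt_eq_el, el_zero_mul, el_one_mul]
  simp

lemma el_zero_eq (x y : ℤ) : el x y 0 = el x y 1 * gt := by
  rw [gt_eq_el, el_one_mul]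
  simp [CharTwo.add_self_eq_zero]

lemma mem_genSet {s : GG} (hs : s ∈ GenSet) : s = ga ∨ s = ga⁻¹ ∨ s = gt := by
  rcases hs with rfl | rfl | rfl | rfl
  exacts [Or.inl rfl, Or.inr (Or.inl rfl), Or.inr (Or.inr rfl), Or.inr (Or.inr gt_inv)]

lemma isWord_append {u v : List GG} : IsWord (u ++ v) ↔ IsWord u ∧ IsWord v :=
  List.forall_mem_append

lemma isWord_cons {s : GG} {v : List GG} : IsWord (s :: v) ↔ s ∈ GenSet ∧ IsWord v :=
  List.forall_mem_cons

lemma isWord_apow (x : ℤ) : IsWord (apow x) := by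
  intro s hs
  unfold apow at hs
  split at hs <;> rw [List.eq_of_mem_replicate hs] <;> simp [GenSet]

@[elab_as_elim]
lemma IsWord.induction {motive : List GG → Prop} (nil : motive [])
    (ga_cons : ∀ v, motive v → motive (ga :: v)) (ga_inv_cons : ∀ v, motive v → motive (ga⁻¹ :: v))
    (gt_cons : ∀ v, motive v → motive (gt :: v)) {v : List GG} (hv : IsWord v) : motive v := by
  induction v with
  | nil => exact nil
  | cons s v ih =>
    obtain ⟨hs, hv'⟩ := isWord_cons.mp hv
    rcases mem_genSet hs with rfl | rfl | rfl
    exacts [ga_cons v (ih hv'), ga_inv_cons v (ih hv'), gt_cons v (ih hv')]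

lemma tCount_append (u v : List GG) : tCount (u ++ v) = tCount u + tCount v :=
  List.countP_append ..

lemma tCount_cons_gt (v : List GG) : tCount (gt :: v) = tCount v + 1 := by
  simp [tCount]

lemma tCount_cons_of_ne {s : GG} (hs : s ≠ gt) (v : List GG) : tCount (s :: v) = tCount v := by
  simp [tCount, gt_inv, hs]

lemma taxicab_prod_add_tCount_le_length {v : List GG} (hv : IsWord v) :
    taxicab v.prod + tCount v ≤ v.length := by
  refine IsWord.induction le_rfl (fun v ih => ?_) (fun v ih => ?_) (fun v ih => ?_) hv
  · rw [List.prod_cons, ga_mul, tCount_cons_of_ne ga_ne_gt, List.length_cons]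
    simp only [taxicab, xCoord_el, yCoord_el] at ih ⊢
    omega
  · rw [List.prod_cons, ga_inv_mul, tCount_cons_of_ne ga_inv_ne_gt, List.length_cons]
    simp only [taxicab, xCoord_el, yCoord_el] at ih ⊢
    omega
  · rw [List.prod_cons, gt_mul, tCount_cons_gt, List.length_cons]
    simp only [taxicab, xCoord_el, yCoord_el] at ih ⊢
    omega

lemma parity_prod {v : List GG} (hv : IsWord v) : parity v.prod = tCount v := by
  refine IsWord.induction rfl (fun v ih => ?_) (fun v ih => ?_) (fun v ih => ?_) hv
  · rw [List.prod_cons, ga_mul, tCount_cons_of_ne ga_ne_gt, parity_el, ih]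
  · rw [List.prod_cons, ga_inv_mul, tCount_cons_of_ne ga_inv_ne_gt, parity_el, ih]
  · rw [List.prod_cons, gt_mul, tCount_cons_gt, parity_el, ih, Nat.cast_succ, add_comm]

lemma yCoord_prod_of_tCount_eq_zero {v : List GG} (hv : IsWord v) :
    tCount v = 0 → yCoord v.prod = 0 := by
  refine IsWord.induction (fun _ => rfl) (fun v ih h => ?_) (fun v ih h => ?_) (fun v _ h => ?_) hv
  · rw [List.prod_cons, ga_mul, yCoord_el, ih (by rwa [tCount_cons_of_ne ga_ne_gt] at h)]
  · rw [List.prod_cons, ga_inv_mul, yCoord_el, ih (by rwa [tCount_cons_of_ne ga_inv_ne_gt] at h)]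
  · simp [tCount_cons_gt] at h

lemma exists_prod_eq_el_of_tCount_eq_zero {v : List GG} (hv : IsWord v) (h : tCount v = 0) :
    ∃ x, v.prod = el x 0 0 := by
  refine ⟨xCoord v.prod, ?_⟩
  conv_lhs => rw [← el_coords v.prod]
  rw [yCoord_prod_of_tCount_eq_zero hv h, parity_prod hv, h, Nat.cast_zero]

lemma Represents.append {u v : List GG} {g h : GG} (hu : Represents u g) (hv : Represents v h) :
    Represents (u ++ v) (g * h) :=
  ⟨isWord_append.mpr ⟨hu.1, hv.1⟩, by rw [List.prod_append, hu.2, hv.2]⟩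

lemma represents_gt : Represents [gt] gt := ⟨by simp [IsWord, GenSet], List.prod_singleton⟩

lemma apow_prod (x : ℤ) : (apow x).prod = el x 0 0 := by
  rw [← ga_zpow, apow]
  split_ifs with hx
  · rw [List.prod_replicate, ← zpow_natCast, Int.toNat_of_nonneg hx]
  · rw [List.prod_replicate, inv_pow, ← zpow_natCast, ← zpow_neg, Int.toNat_of_nonneg (by omega),
      neg_neg]

lemma represents_apow (x : ℤ) : Represents (apow x) (el x 0 0) := ⟨isWord_apow x, apow_prod x⟩

lemma apow_natCast (n : ℕ) : apow n = List.replicate n ga := by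
  simp [apow]

lemma exists_represents (g : GG) : ∃ w, Represents w g := by
  obtain ⟨x, y, e, rfl⟩ : ∃ x y e, g = el x y e := ⟨_, _, _, (el_coords g).symm⟩
  have hodd : Represents (apow x ++ [gt] ++ apow y) (el x y 1) := by
    rw [el_one_eq]
    exact ((represents_apow x).append represents_gt).append (represents_apow y)
  fin_cases e
  · exact ⟨_, el_zero_eq x y ▸ hodd.append represents_gt⟩
  · exact ⟨_, hodd⟩

lemma taxicab_le_wordLength (g : GG) : taxicab g ≤ wordLength g := by
  obtain ⟨w, ⟨hw, rfl⟩, hlen⟩ := Nat.sInf_mem (s := {n | ∃ w, Represents w g ∧ w.length = n})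
    (let ⟨w, hw⟩ := exists_represents g; ⟨w.length, w, hw, rfl⟩)
  calc taxicab w.prod ≤ taxicab w.prod + tCount w := Nat.le_add_right ..
    _ ≤ w.length := taxicab_prod_add_tCount_le_length hw
    _ = wordLength w.prod := hlen

def detour (n : ℕ) : List GG := [gt] ++ apow n ++ [gt] ++ apow n ++ [gt]

def shortcut (n : ℕ) : List GG := apow n ++ [gt] ++ apow n

lemma represents_shortcut (n : ℕ) : Represents (shortcut n) (el n n 1) := by
  rw [el_one_eq]
  exact ((represents_apow n).append represents_gt).append (represents_apow n)

lemma represents_detour (n : ℕ) : Represents (detour n) (el n n 1) := by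
  have hprod : gt * el n 0 0 * gt * el n 0 0 * gt = el n n 1 := by
    simp [gt_eq_el, el_zero_mul, el_one_mul, CharTwo.add_self_eq_zero]
  rw [← hprod]
  exact (((represents_gt.append (represents_apow n)).append represents_gt).append
    (represents_apow n)).append represents_gt

lemma length_detour (n : ℕ) : (detour n).length = 2 * n + 3 := by
  simp only [detour, List.length_append, List.length_singleton, apow_natCast, List.length_replicate]
  omega

lemma length_shortcut (n : ℕ) : (shortcut n).length = 2 * n + 1 := by
  simp only [shortcut, List.length_append, List.length_singleton, apow_natCast, List.length_replicate]
  omega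

lemma not_isGeodesic_detour (n : ℕ) : ¬ IsGeodesic (detour n) := fun ⟨_, hgeod⟩ => by
  have := hgeod _ (represents_shortcut n).1
    ((represents_shortcut n).2.trans (represents_detour n).2.symm)
  rw [length_detour, length_shortcut] at this
  omega

lemma pt_detour (n : ℕ) : pt (detour n) (n + 1) = el 0 n 1 := by
  have hlen : ([gt] ++ apow n).length = n + 1 := by simp [apow_natCast]
  rw [pt, detour, List.append_assoc, List.append_assoc, ← List.append_assoc [gt],
    List.take_left' hlen, (represents_gt.append (represents_apow n)).2, gt_eq_el, el_one_mul]
  simp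

lemma tCount_eq_one_of_represents {v : List GG} {n : ℕ} (hv : Represents v (el n n 1))
    (hlen : v.length < 2 * n + 3) : tCount v = 1 := by
  have hbound := taxicab_prod_add_tCount_le_length hv.1
  rw [hv.2, taxicab_el] at hbound
  obtain ⟨m, hm⟩ : Odd (tCount v) := by
    rw [← ZMod.natCast_eq_one_iff_odd, ← parity_prod hv.1, hv.2, parity_el]
  omega

lemma le_dA_pt_of_tCount_eq_one {v : List GG} {n : ℕ} (hv : Represents v (el n n 1))
    (ht : tCount v = 1) (i : ℕ) : n ≤ dA (pt v i) (el 0 n 1) := by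
  have hsplit := List.take_append_drop i v
  set P := v.take i
  set S := v.drop i
  obtain ⟨hP, hS⟩ := isWord_append.mp (hsplit ▸ hv.1)
  have hcount : tCount P + tCount S = 1 := by rw [← tCount_append, hsplit, ht]
  refine le_trans ?_ (taxicab_le_wordLength _)
  rcases (by omega : tCount P = 0 ∨ tCount S = 0) with h0 | h0
  · obtain ⟨x, hx⟩ := exists_prod_eq_el_of_tCount_eq_zero hP h0
    have hdiff : P.prod⁻¹ * el 0 n 1 = el (-x) n 1 := by
      rw [inv_mul_eq_iff_eq_mul, hx, el_zero_mul]
      simp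
    rw [pt, hdiff, taxicab_el]
    omega
  · obtain ⟨x, hx⟩ := exists_prod_eq_el_of_tCount_eq_zero hS h0
    have hdiff : P.prod⁻¹ * el 0 n 1 = el x (-n) 0 := by
      rw [inv_mul_eq_iff_eq_mul]
      calc el 0 n 1 = el n n 1 * el 0 (-n) 0 := by rw [el_one_mul]; simp
        _ = P.prod * S.prod * el 0 (-n) 0 := by rw [← List.prod_append, hsplit, hv.2]
        _ = P.prod * el x (-n) 0 := by rw [mul_assoc, hx, el_zero_mul]; simp
    rw [pt, hdiff, taxicab_el]
    omega

/-- The generating set A does not have the falsification by fellow traveler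
property: for every k there is a non-geodesic word w over A (one may take
w = t aⁿ t aⁿ t for suitable n) such that no strictly shorter word over A
representing the same element k-fellow travels w. -/
theorem no_fftp :
    ∀ k : ℕ, ∃ w : List GG,
      (∃ n : ℕ, w = [gt] ++ apow n ++ [gt] ++ apow n ++ [gt]) ∧
      IsWord w ∧ ¬ IsGeodesic w ∧
      ∀ v : List GG, IsWord v → v.prod = w.prod → v.length < w.length →
        ¬ FellowTravels k v w := by
  intro k
  refine ⟨detour (k + 1), ⟨k + 1, rfl⟩, (represents_detour _).1, not_isGeodesic_detour _, ?_⟩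
  intro v hv hprod hlen hfellow
  have hrep : Represents v (el (k + 1 : ℕ) (k + 1 : ℕ) 1) :=
    ⟨hv, hprod.trans (represents_detour _).2⟩
  have ht := tCount_eq_one_of_represents hrep (length_detour _ ▸ hlen)
  have hfar := le_dA_pt_of_tCount_eq_one hrep ht (k + 1 + 1)
  have hnear := pt_detour (k + 1) ▸ hfellow (k + 1 + 1)
  omega
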